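/- arXiv:2503.22953 — 3 statements merged into one kernel-verified Lean document; each statement's English description precedes it below -/
import Mathlib

section
/- Let B be a Banach space and Â : B → B a compact linear operator. Set A = I − Â. Then there exists a positive integer n₀ such that ker(A^{n₀+1}) = ker(A^{n₀}). -/
/-!
If the kernels of `A ^ n`, `A = 1 - T`, grew strictly forever, Riesz's lemma would give bounded
vectors `v n ∈ ker A ^ (n + 1)` at distance `≥ 1` from `ker A ^ n`. For `m < n` the vector
`v n - (T v n - T v m) = A v n + v m - A v m` lies in `ker A ^ n`, so the points `T v n` are
pairwise `1`-separated; but they lie in a compact set since `T` is compact.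
-/

open LinearMap

theorem riesz_lemma_of_norm_lt_of_lt {𝕜 E : Type*} [NontriviallyNormedField 𝕜]
    [NormedAddCommGroup E] [NormedSpace 𝕜 E] {c : 𝕜} (hc : 1 < ‖c‖) {R : ℝ} (hR : ‖c‖ < R)
    {F G : Submodule 𝕜 E} (hFc : IsClosed (F : Set E)) (hFG : F < G) :
    ∃ x ∈ G, ‖x‖ ≤ R ∧ ∀ y ∈ F, 1 ≤ ‖x - y‖ := by
  obtain ⟨x, hxG, hxF⟩ := SetLike.exists_of_lt hFG
  obtain ⟨x₀, hx₀R, hx₀F⟩ := riesz_lemma_of_norm_lt (F := F.comap G.subtype) hc hR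
    (hFc.preimage continuous_subtype_val) ⟨⟨x, hxG⟩, hxF⟩
  exact ⟨x₀, x₀.2, hx₀R, fun y hy => hx₀F ⟨y, hFG.le hy⟩ hy⟩

theorem IsCompact.exists_lt_dist_lt {X : Type*} [PseudoMetricSpace X] {K : Set X}
    (hK : IsCompact K) {u : ℕ → X} (hu : ∀ n, u n ∈ K) {ε : ℝ} (hε : 0 < ε) :
    ∃ m n, m < n ∧ dist (u n) (u m) < ε := by
  obtain ⟨_, -, φ, hφ, hlim⟩ := hK.tendsto_subseq hu
  obtain ⟨N, hN⟩ := Metric.cauchySeq_iff'.mp hlim.cauchySeq ε hε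
  exact ⟨φ N, φ (N + 1), hφ N.lt_succ_self, hN (N + 1) N.le_succ⟩

theorem Module.End.sub_sub_mem_ker_one_sub_pow {R M : Type*} [Ring R] [AddCommGroup M]
    [Module R M] (T : Module.End R M) {k : ℕ} {x y : M} (hx : x ∈ ker ((1 - T) ^ (k + 1)))
    (hy : y ∈ ker ((1 - T) ^ k)) : x - (T x - T y) ∈ ker ((1 - T) ^ k) := by
  set A := 1 - T
  have hAx : A x ∈ ker (A ^ k) := by
    rwa [mem_ker, ← mul_apply, ← pow_succ]
  have hAy : A y ∈ ker (A ^ k) := by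
    rw [mem_ker, ← mul_apply, ← pow_succ, pow_succ', mul_apply, mem_ker.mp hy, map_zero]
  have hdecomp : x - (T x - T y) = A x + (y - A y) := by
    simp only [A, LinearMap.sub_apply, Module.End.one_apply]
    abel
  rw [hdecomp]
  exact add_mem hAx (sub_mem hy hAy)

theorem IsCompactOperator.exists_ker_one_sub_pow_succ_eq {𝕜 E : Type*}
    [NontriviallyNormedField 𝕜] [NormedAddCommGroup E] [NormedSpace 𝕜 E] {T : E →L[𝕜] E}
    (hT : IsCompactOperator T) (N : ℕ) :
    ∃ n, N ≤ n ∧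
      ker ((1 - (T : Module.End 𝕜 E)) ^ (n + 1)) = ker ((1 - (T : Module.End 𝕜 E)) ^ n) := by
  set A := 1 - (T : Module.End 𝕜 E)
  by_contra! hgrow
  have hlt (k : ℕ) : ker (A ^ (N + k)) < ker (A ^ (N + k + 1)) :=
    lt_of_le_of_ne ((iterateKer A).monotone (Nat.le_succ _)) (hgrow _ (by omega)).symm
  have hclosed (n : ℕ) : IsClosed (ker (A ^ n) : Set E) := by
    simpa [A] using ((1 - T) ^ n).isClosed_ker
  obtain ⟨c, hc⟩ := NormedField.exists_one_lt_norm 𝕜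
  choose v hvker hvR hvfar using fun k =>
    riesz_lemma_of_norm_lt_of_lt hc (lt_add_one ‖c‖) (hclosed (N + k)) (hlt k)
  have hsep (m n : ℕ) (hmn : m < n) : 1 ≤ dist (T (v n)) (T (v m)) := by
    rw [dist_eq_norm, ← sub_sub_cancel (v n) (T (v n) - T (v m))]
    refine hvfar n _ (Module.End.sub_sub_mem_ker_one_sub_pow _ (hvker n) ?_)
    exact (iterateKer A).monotone (by omega) (hvker m)
  obtain ⟨K, hK, hTK⟩ := hT.image_closedBall_subset_compact (‖c‖ + 1)
  obtain ⟨m, n, hmn, hdist⟩ :=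
    hK.exists_lt_dist_lt (fun n => hTK ⟨v n, by simpa using hvR n, rfl⟩) one_pos
  exact (hsep m n hmn).not_gt hdist

theorem stmt0_general (B : Type*) [NormedAddCommGroup B] [NormedSpace ℂ B]
    (Ahat : B →L[ℂ] B) (hAhat : IsCompactOperator Ahat) :
    ∃ n₀ : ℕ, 0 < n₀ ∧
      LinearMap.ker (((1 - Ahat) ^ (n₀ + 1) : B →L[ℂ] B) : B →ₗ[ℂ] B) = LinearMap.ker (((1 - Ahat) ^ n₀ : B →L[ℂ] B) : B →ₗ[ℂ] B) := by
  obtain ⟨n, hn, hker⟩ := hAhat.exists_ker_one_sub_pow_succ_eq 1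
  exact ⟨n, hn, by simpa using hker⟩

/-- Let `B` be a Banach space and `Â : B → B` a compact continuous linear operator.
Set `A = I − Â`. Then there exists a positive integer `n₀` such that
`ker (A ^ (n₀+1)) = ker (A ^ n₀)`. -/
theorem stmt0 (B : Type*) [NormedAddCommGroup B] [NormedSpace ℂ B] [CompleteSpace B]
    (Ahat : B →L[ℂ] B) (hAhat : IsCompactOperator Ahat) :
    ∃ n₀ : ℕ, 0 < n₀ ∧
      LinearMap.ker (((1 - Ahat) ^ (n₀ + 1) : B →L[ℂ] B) : B →ₗ[ℂ] B) = LinearMap.ker (((1 - Ahat) ^ n₀ : B →L[ℂ] B) : B →ₗ[ℂ] B) :=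
  stmt0_general B Ahat hAhat
end

section
/- Let B be a Banach space, Â : B → B compact linear, A = I − Â, and K = ker(A^{n₀}), R = range(A^{n₀}) where ker(A^{n₀+1}) = ker(A^{n₀}). Then ker A ⊆ K, A(K) ⊆ K, A(R) ⊆ R, and the restriction of A to R is a bijection of R onto R. -/
/-!
Write `A = 1 - Â`. Both `A` and `Â` commute with `A ^ n₀`, so they leave `K` invariant and induce
operators `Ā = 1 - Ĉ` on the Banach space `B ⧸ K`, where `Ĉ` is again compact. The stabilization
`ker A ^ (n₀ + 1) = K` says precisely that `Ā` is injective, so by the Fredholm alternative `Ā` is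
surjective, i.e. `B = A B + K`. Applying `A ^ n₀`, which kills `K`, gives `R = A ^ (n₀ + 1) B = A R`.
Injectivity of `A` on `R` is again the stabilization of the kernels.
-/

open Module End LinearMap

namespace Module.End

variable {R M : Type*} [Ring R] [AddCommGroup M] [Module R M]

theorem ker_le_comap_ker_of_commute {f g : End R M} (h : Commute f g) :
    ker f ≤ (ker f).comap g := by
  intro x hx
  rw [Submodule.mem_comap, mem_ker, ← mul_apply, h.eq, mul_apply, mem_ker.1 hx, map_zero]

theorem ker_pow_le_comap_ker_pow (f : End R M) (n : ℕ) : ker (f ^ n) ≤ (ker (f ^ n)).comap f :=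
  ker_le_comap_ker_of_commute (Commute.pow_left rfl n)

variable {f : End R M} {n : ℕ}

theorem disjoint_range_pow_ker (hker : ker (f ^ (n + 1)) = ker (f ^ n)) :
    Disjoint (range (f ^ n)) (ker f) := by
  refine Submodule.disjoint_def.2 ?_
  rintro _ ⟨u, rfl⟩ hu
  have : u ∈ ker (f ^ (n + 1)) := by rwa [mem_ker, pow_succ', mul_apply]
  rwa [hker] at this

theorem injective_mapQ_ker_pow (hker : ker (f ^ (n + 1)) = ker (f ^ n)) :
    Function.Injective ((ker (f ^ n)).mapQ _ f (ker_pow_le_comap_ker_pow f n)) := by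
  rw [← LinearMap.ker_eq_bot, Submodule.eq_bot_iff]
  intro q hq
  obtain ⟨x, rfl⟩ := Submodule.mkQ_surjective _ q
  rw [mem_ker, Submodule.mkQ_apply, Submodule.mapQ_apply, Submodule.Quotient.mk_eq_zero] at hq
  rw [Submodule.mkQ_apply, Submodule.Quotient.mk_eq_zero, ← hker, mem_ker, pow_succ, mul_apply]
  exact hq

theorem range_pow_succ_eq_of_surjective_mapQ
    (hsurj : Function.Surjective ((ker (f ^ n)).mapQ _ f (ker_pow_le_comap_ker_pow f n))) :
    range (f ^ (n + 1)) = range (f ^ n) := by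
  refine le_antisymm (by rw [pow_succ]; exact range_comp_le_range _ _) ?_
  rintro _ ⟨x, rfl⟩
  obtain ⟨q, hq⟩ := hsurj (Submodule.Quotient.mk x)
  obtain ⟨y, rfl⟩ := Submodule.mkQ_surjective _ q
  rw [Submodule.mkQ_apply, Submodule.mapQ_apply, Submodule.Quotient.eq, mem_ker, map_sub,
    sub_eq_zero] at hq
  exact ⟨y, by rw [pow_succ, mul_apply, hq]⟩

end Module.End

namespace Submodule

variable {R M : Type*} [Ring R] [TopologicalSpace M] [AddCommGroup M] [Module R M]
  (S : Submodule R M)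

def mapQL (T : M →L[R] M) (h : S ≤ S.comap (T : M →ₗ[R] M)) : M ⧸ S →L[R] M ⧸ S :=
  S.liftQL (S.mkQL ∘L T) fun _ hx => (Quotient.mk_eq_zero S).2 (h hx)

theorem _root_.IsCompactOperator.mapQL [ContinuousAdd M] {T : M →L[R] M}
    (hT : IsCompactOperator T) (h : S ≤ S.comap (T : M →ₗ[R] M)) :
    IsCompactOperator (S.mapQL T h) := by
  obtain ⟨K, hK, hTK⟩ := hT
  refine ⟨S.mkQ '' K, hK.image S.continuous_mkQ, ?_⟩
  have hnhds := S.isOpenMap_mkQ.image_mem_nhds hTK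
  rw [map_zero] at hnhds
  refine Filter.mem_of_superset hnhds ?_
  rintro _ ⟨x, hx, rfl⟩
  exact ⟨T x, hx, rfl⟩

end Submodule

section Banach

variable {𝕜 X : Type*} [NontriviallyNormedField 𝕜] [NormedAddCommGroup X] [NormedSpace 𝕜 X]
  [CompleteSpace X]

theorem IsCompactOperator.surjective_one_sub_of_injective {C : X →L[𝕜] X}
    (hC : IsCompactOperator C) (hinj : Function.Injective ⇑(1 - C)) :
    Function.Surjective ⇑(1 - C) := by
  have hev : ¬ HasEigenvalue (C : End 𝕜 X) 1 := by
    intro hev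
    obtain ⟨x, hx⟩ := hev.exists_hasEigenvector
    have hfix : C x = x := by simpa using hx.apply_eq_smul
    exact hx.2 (hinj (by simp [hfix]))
  have hres := (hC.hasEigenvalue_or_mem_resolventSet one_ne_zero).resolve_left hev
  rw [spectrum.mem_resolventSet_iff, map_one, ContinuousLinearMap.isUnit_iff_bijective] at hres
  exact hres.2

theorem IsCompactOperator.range_one_sub_pow_succ_eq {C : X →L[𝕜] X} (hC : IsCompactOperator C)
    {n : ℕ} (hker : ker ((↑(1 - C) : End 𝕜 X) ^ (n + 1)) = ker ((↑(1 - C) : End 𝕜 X) ^ n)) :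
    range ((↑(1 - C) : End 𝕜 X) ^ (n + 1)) = range ((↑(1 - C) : End 𝕜 X) ^ n) := by
  set K := ker ((↑(1 - C) : End 𝕜 X) ^ n)
  have : IsClosed (K : Set X) := by
    simpa only [K, ← ContinuousLinearMap.toLinearMap_pow] using ((1 - C) ^ n).isClosed_ker
  have hCK : K ≤ K.comap (C : End 𝕜 X) :=
    ker_le_comap_ker_of_commute (((Commute.one_left _).sub_left (Commute.refl _)).pow_left n)
  have hquot : K.mapQL (1 - C) (ker_pow_le_comap_ker_pow _ n) = 1 - K.mapQL C hCK := by
    ext q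
    obtain ⟨x, rfl⟩ := K.mkQ_surjective q
    rfl
  refine range_pow_succ_eq_of_surjective_mapQ ?_
  have hsurj := (hC.mapQL K hCK).surjective_one_sub_of_injective
    (by rw [← hquot]; exact injective_mapQ_ker_pow hker)
  rwa [← hquot] at hsurj

end Banach

theorem stmt3_general (B : Type*) [NormedAddCommGroup B] [NormedSpace ℂ B] [CompleteSpace B]
    (Ahat : B →L[ℂ] B) (hAhat : IsCompactOperator Ahat) (n₀ : ℕ)
    (hstab : LinearMap.ker (((1 - Ahat) ^ (n₀ + 1) : B →L[ℂ] B) : B →ₗ[ℂ] B) = LinearMap.ker (((1 - Ahat) ^ n₀ : B →L[ℂ] B) : B →ₗ[ℂ] B)) :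
    LinearMap.ker ((1 - Ahat : B →L[ℂ] B) : B →ₗ[ℂ] B) ≤ LinearMap.ker (((1 - Ahat) ^ n₀ : B →L[ℂ] B) : B →ₗ[ℂ] B) ∧
    Submodule.map ((1 - Ahat : B →L[ℂ] B) : B →ₗ[ℂ] B) (LinearMap.ker (((1 - Ahat) ^ n₀ : B →L[ℂ] B) : B →ₗ[ℂ] B)) ≤
      LinearMap.ker (((1 - Ahat) ^ n₀ : B →L[ℂ] B) : B →ₗ[ℂ] B) ∧
    Submodule.map ((1 - Ahat : B →L[ℂ] B) : B →ₗ[ℂ] B) (LinearMap.range (((1 - Ahat) ^ n₀ : B →L[ℂ] B) : B →ₗ[ℂ] B)) =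
      LinearMap.range (((1 - Ahat) ^ n₀ : B →L[ℂ] B) : B →ₗ[ℂ] B) ∧
    Set.InjOn (⇑(1 - Ahat : B →L[ℂ] B)) (LinearMap.range (((1 - Ahat) ^ n₀ : B →L[ℂ] B) : B →ₗ[ℂ] B) : Set B) := by
  simp only [ContinuousLinearMap.toLinearMap_pow] at hstab ⊢
  refine ⟨?_, ?_, ?_, ?_⟩
  · rw [← hstab, pow_succ]
    exact ker_le_ker_comp _ _
  · exact Submodule.map_le_iff_le_comap.2 (ker_pow_le_comap_ker_pow _ n₀)
  · rw [← range_comp, ← mul_eq_comp, ← pow_succ']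
    exact hAhat.range_one_sub_pow_succ_eq hstab
  · exact injOn_of_disjoint_ker le_rfl (disjoint_range_pow_ker hstab)

/-- With `A = I - Â`, `Â` compact, `K = ker (A^{n₀})`, `R = range (A^{n₀})` and
`ker (A^{n₀+1}) = ker (A^{n₀})`: `ker A ⊆ K`, `A(K) ⊆ K`, `A(R) ⊆ R`, and
`A` restricted to `R` is a bijection of `R` onto `R`. -/
theorem stmt3 (B : Type*) [NormedAddCommGroup B] [NormedSpace ℂ B] [CompleteSpace B]
    (Ahat : B →L[ℂ] B) (hAhat : IsCompactOperator Ahat) (n₀ : ℕ) (hn₀ : 0 < n₀)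
    (hstab : LinearMap.ker (((1 - Ahat) ^ (n₀ + 1) : B →L[ℂ] B) : B →ₗ[ℂ] B) = LinearMap.ker (((1 - Ahat) ^ n₀ : B →L[ℂ] B) : B →ₗ[ℂ] B)) :
    LinearMap.ker ((1 - Ahat : B →L[ℂ] B) : B →ₗ[ℂ] B) ≤ LinearMap.ker (((1 - Ahat) ^ n₀ : B →L[ℂ] B) : B →ₗ[ℂ] B) ∧
    Submodule.map ((1 - Ahat : B →L[ℂ] B) : B →ₗ[ℂ] B) (LinearMap.ker (((1 - Ahat) ^ n₀ : B →L[ℂ] B) : B →ₗ[ℂ] B)) ≤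
      LinearMap.ker (((1 - Ahat) ^ n₀ : B →L[ℂ] B) : B →ₗ[ℂ] B) ∧
    Submodule.map ((1 - Ahat : B →L[ℂ] B) : B →ₗ[ℂ] B) (LinearMap.range (((1 - Ahat) ^ n₀ : B →L[ℂ] B) : B →ₗ[ℂ] B)) =
      LinearMap.range (((1 - Ahat) ^ n₀ : B →L[ℂ] B) : B →ₗ[ℂ] B) ∧
    Set.InjOn (⇑(1 - Ahat : B →L[ℂ] B)) (LinearMap.range (((1 - Ahat) ^ n₀ : B →L[ℂ] B) : B →ₗ[ℂ] B) : Set B) :=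
  stmt3_general B Ahat hAhat n₀ hstab
end

section
/- Let a, b, c, d, ε be real numbers with b ≥ ε/2 > 0 and d ≥ ε/2. Suppose N, M : [0, ∞) → [0, ∞) are log-convex functions (i.e. N(θx + (1−θ)y) ≤ N(x)^θ N(y)^{1−θ} for θ ∈ [0,1]). Then N(a+b)·M(c+d) ≤ N(a+b+d−ε/2)·M(c+ε/2) + N(a+ε/2)·M(c+b+d−ε/2). -/
open Real

/-- Abstract convexity product estimate: if `N, M` are nonnegative log-convex
functions on `[0,∞)` and `b ≥ ε/2 > 0`, `d ≥ ε/2`, then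
`N(a+b)·M(c+d) ≤ N(a+b+d−ε/2)·M(c+ε/2) + N(a+ε/2)·M(c+b+d−ε/2)`. -/
theorem stmt11 (N M : ℝ → ℝ)
    (hN0 : ∀ x, 0 ≤ x → 0 ≤ N x) (hM0 : ∀ x, 0 ≤ x → 0 ≤ M x)
    (hN : ∀ x y θ : ℝ, 0 ≤ x → 0 ≤ y → 0 ≤ θ → θ ≤ 1 →
      N (θ * x + (1 - θ) * y) ≤ N x ^ θ * N y ^ (1 - θ))
    (hM : ∀ x y θ : ℝ, 0 ≤ x → 0 ≤ y → 0 ≤ θ → θ ≤ 1 →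
      M (θ * x + (1 - θ) * y) ≤ M x ^ θ * M y ^ (1 - θ))
    (a b c d ε : ℝ) (ha : 0 ≤ a) (hc : 0 ≤ c) (hε : 0 < ε)
    (hb : ε / 2 ≤ b) (hd : ε / 2 ≤ d) :
    N (a + b) * M (c + d) ≤
      N (a + b + d - ε / 2) * M (c + ε / 2) +
      N (a + ε / 2) * M (c + b + d - ε / 2) := by
  rcases eq_or_lt_of_le (by linarith : ε ≤ b + d) with h | h
  · -- degenerate case: b = d = ε/2
    have h1 : a + b + d - ε / 2 = a + b := by linarith
    have h2 : c + ε / 2 = c + d := by linarith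
    rw [h1, h2]
    have hnn := mul_nonneg (hN0 (a + ε / 2) (by linarith))
      (hM0 (c + b + d - ε / 2) (by linarith))
    linarith
  · set θ : ℝ := (b - ε / 2) / (b + d - ε) with hθdef
    have hpos : 0 < b + d - ε := by linarith
    have hθ0 : 0 ≤ θ := div_nonneg (by linarith) hpos.le
    have hθ1 : θ ≤ 1 := by rw [hθdef, div_le_one hpos]; linarith
    have hX : (0:ℝ) ≤ a + ε / 2 := by linarith
    have hY : (0:ℝ) ≤ a + b + d - ε / 2 := by linarith
    have hU : (0:ℝ) ≤ c + ε / 2 := by linarith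
    have hV : (0:ℝ) ≤ c + b + d - ε / 2 := by linarith
    have hθmul : θ * (b + d - ε) = b - ε / 2 := div_mul_cancel₀ _ hpos.ne'
    have e1 : θ * (a + b + d - ε / 2) + (1 - θ) * (a + ε / 2) = a + b := by
      have : θ * (a + b + d - ε / 2) + (1 - θ) * (a + ε / 2)
          = a + ε / 2 + θ * (b + d - ε) := by ring
      rw [this, hθmul]; ring
    have e2 : θ * (c + ε / 2) + (1 - θ) * (c + b + d - ε / 2) = c + d := by
      have : θ * (c + ε / 2) + (1 - θ) * (c + b + d - ε / 2)
          = c + b + d - ε / 2 - θ * (b + d - ε) := by ring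
      rw [this, hθmul]; ring
    have h1 := hN (a + b + d - ε / 2) (a + ε / 2) θ hY hX hθ0 hθ1
    rw [e1] at h1
    have h2 := hM (c + ε / 2) (c + b + d - ε / 2) θ hU hV hθ0 hθ1
    rw [e2] at h2
    have hNY := hN0 _ hY
    have hNX := hN0 _ hX
    have hMU := hM0 _ hU
    have hMV := hM0 _ hV
    have key : N (a + b) * M (c + d)
        ≤ (N (a + b + d - ε / 2) * M (c + ε / 2)) ^ θ
          * (N (a + ε / 2) * M (c + b + d - ε / 2)) ^ (1 - θ) := by
      calc N (a + b) * M (c + d)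
          ≤ (N (a + b + d - ε / 2) ^ θ * N (a + ε / 2) ^ (1 - θ))
            * (M (c + ε / 2) ^ θ * M (c + b + d - ε / 2) ^ (1 - θ)) := by
            apply mul_le_mul h1 h2 (hM0 _ (by linarith))
            exact mul_nonneg (Real.rpow_nonneg hNY _) (Real.rpow_nonneg hNX _)
        _ = (N (a + b + d - ε / 2) * M (c + ε / 2)) ^ θ
          * (N (a + ε / 2) * M (c + b + d - ε / 2)) ^ (1 - θ) := by
            rw [Real.mul_rpow hNY hMU, Real.mul_rpow hNX hMV]; ring
    have gm := Real.geom_mean_le_arith_mean2_weighted hθ0 (by linarith : (0:ℝ) ≤ 1 - θ)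
      (mul_nonneg hNY hMU) (mul_nonneg hNX hMV) (by ring)
    have hp1 : 0 ≤ N (a + b + d - ε / 2) * M (c + ε / 2) := mul_nonneg hNY hMU
    have hp2 : 0 ≤ N (a + ε / 2) * M (c + b + d - ε / 2) := mul_nonneg hNX hMV
    nlinarith [key, gm]
end
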